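/- arXiv:2511.12326 — 2 statements merged into one kernel-verified Lean document; each statement's English description precedes it below -/
import Mathlib

section
/- If H is a fixed multiplex with at least one edge, F* ⊆ H is a submultiplex achieving the minimum in Φ_H = min over submultiplexes F ⊆ H with |E(F)| ≥ 1 of n^{|V(F)|} p₁^{|E(F¹)\E(F²)|} p₂^{|E(F²)\E(F¹)|} p₁₂^{|E(F¹)∩E(F²)|}, and Φ_H → 0 as n → ∞, then P(X(H, G_n) > 0) → 0. -/
structure Multiplex (V : Type) [DecidableEq V] where
  verts : Finset V
  E1 : Finset (Sym2 V)
  E2 : Finset (Sym2 V)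
  support : ∀ e ∈ E1 ∪ E2, ∀ x ∈ e, x ∈ verts
  loopless : ∀ e ∈ E1 ∪ E2, ¬ e.IsDiag

def Multiplex.Sub {V : Type} [DecidableEq V] (F H : Multiplex V) : Prop :=
  F.verts ⊆ H.verts ∧ F.E1 ⊆ H.E1 ∧ F.E2 ⊆ H.E2

noncomputable def ell {V : Type} [DecidableEq V] (F : Multiplex V) (θ : ℝ × ℝ × ℝ) : ℝ :=
  (F.verts.card : ℝ) - θ.1 * ((F.E1 \ F.E2).card : ℝ)
    - θ.2.1 * ((F.E2 \ F.E1).card : ℝ) - θ.2.2 * ((F.E1 ∩ F.E2).card : ℝ)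

def PairIdx (n : ℕ) : Type := {p : Fin n × Fin n // p.1 < p.2}

instance (n : ℕ) : Fintype (PairIdx n) := by unfold PairIdx; infer_instance
instance (n : ℕ) : DecidableEq (PairIdx n) := by unfold PairIdx; infer_instance

def Config (n : ℕ) : Type := PairIdx n → Bool × Bool

instance (n : ℕ) : Fintype (Config n) := by unfold Config; infer_instance

def edgeW (p1 p2 p12 : ℝ) : Bool × Bool → ℝ
  | (true, true) => p12
  | (true, false) => p1 - p12
  | (false, true) => p2 - p12
  | (false, false) => 1 - p1 - p2 + p12

noncomputable def configProb (n : ℕ) (p1 p2 p12 : ℝ) (f : Config n) : ℝ :=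
  ∏ e : PairIdx n, edgeW p1 p2 p12 (f e)

open Classical in
noncomputable def Pr (n : ℕ) (p1 p2 p12 : ℝ) (A : Config n → Prop) : ℝ :=
  ∑ f ∈ Finset.univ.filter A, configProb n p1 p2 p12 f

noncomputable def expect (n : ℕ) (p1 p2 p12 : ℝ) (g : Config n → ℝ) : ℝ :=
  ∑ f : Config n, configProb n p1 p2 p12 f * g f

def ValidP (p1 p2 p12 : ℝ) : Prop :=
  0 < p1 ∧ p1 < 1 ∧ 0 < p2 ∧ p2 < 1 ∧ 0 < p12 ∧
    max 0 (p1 + p2 - 1) ≤ p12 ∧ p12 ≤ min p1 p2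

def adj1 {n : ℕ} (f : Config n) (i j : Fin n) : Prop :=
  ∃ p : PairIdx n, (p.val = (i, j) ∨ p.val = (j, i)) ∧ (f p).1 = true

def adj2 {n : ℕ} (f : Config n) (i j : Fin n) : Prop :=
  ∃ p : PairIdx n, (p.val = (i, j) ∨ p.val = (j, i)) ∧ (f p).2 = true

def IsHom {V : Type} [DecidableEq V] {n : ℕ} (H : Multiplex V)
    (φ : {x // x ∈ H.verts} → Fin n) (f : Config n) : Prop :=
  (∀ a b : {x // x ∈ H.verts}, s(a.val, b.val) ∈ H.E1 → adj1 f (φ a) (φ b)) ∧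
  (∀ a b : {x // x ∈ H.verts}, s(a.val, b.val) ∈ H.E2 → adj2 f (φ a) (φ b))

open Classical in
noncomputable def homCount {V : Type} [DecidableEq V] (n : ℕ) (H : Multiplex V)
    (f : Config n) : ℕ :=
  (Finset.univ.filter
    (fun φ : {x // x ∈ H.verts} ↪ Fin n => IsHom H (fun a => φ a) f)).card

noncomputable def phiVal {V : Type} [DecidableEq V] (F : Multiplex V) (n : ℕ)
    (p1 p2 p12 : ℝ) : ℝ :=
  (n : ℝ) ^ F.verts.card * p1 ^ (F.E1 \ F.E2).card * p2 ^ (F.E2 \ F.E1).card *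
    p12 ^ (F.E1 ∩ F.E2).card

/-
First moment method. A copy of `H` contains a copy of `F*`, so
`P(X(H) > 0) ≤ P(X(F*) > 0) ≤ E[X(F*)]`. For a fixed injection `φ` of the vertices of `F*`,
being a homomorphism only constrains the pairs onto which `φ` maps edges of `F*`; these pairs
are distinct and independent, so the event has probability at most
`p₁^|E¹ \ E²| * p₂^|E² \ E¹| * p₁₂^|E¹ ∩ E²|`. With at most `n^|V(F*)|` injections this gives
`E[X(F*)] ≤ Φ(F*) → 0`.
-/

open Finset hiding expect

lemma PairIdx.eq_of_val_eq_or_swap {n : ℕ} {p q : PairIdx n}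
    (h : q.val = p.val ∨ q.val = p.val.swap) : q = p := by
  rcases h with h | h
  · exact Subtype.ext h
  · have hq := q.prop
    rw [h] at hq
    exact absurd p.prop (lt_asymm hq)

lemma PairIdx.apply_of_adj {n : ℕ} (P : Bool × Bool → Prop) {f : Config n} {i j : Fin n}
    {p : PairIdx n} (h : ∃ q : PairIdx n, (q.val = (i, j) ∨ q.val = (j, i)) ∧ P (f q))
    (hp : p.val = (i, j)) : P (f p) := by
  obtain ⟨q, hq, hPq⟩ := h
  obtain rfl : q = p := PairIdx.eq_of_val_eq_or_swap (by rw [hp]; exact hq)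
  exact hPq

section Probability

variable {n : ℕ} {p1 p2 p12 : ℝ}

lemma edgeW_nonneg (hv : ValidP p1 p2 p12) (v : Bool × Bool) : 0 ≤ edgeW p1 p2 p12 v := by
  obtain ⟨-, -, -, -, h12, hlow, hup⟩ := hv
  obtain ⟨-, hlow⟩ := max_le_iff.mp hlow
  obtain ⟨hup1, hup2⟩ := le_min_iff.mp hup
  rcases v with ⟨_ | _, _ | _⟩ <;> simp only [edgeW] <;> linarith

lemma configProb_nonneg (hv : ValidP p1 p2 p12) (f : Config n) :
    0 ≤ configProb n p1 p2 p12 f :=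
  prod_nonneg fun e _ => edgeW_nonneg hv (f e)

lemma Pr_eq_sum (A : Config n → Prop) [DecidablePred A] :
    Pr n p1 p2 p12 A = ∑ f ∈ univ.filter A, configProb n p1 p2 p12 f := by
  rw [Pr]
  congr 1
  exact filter_congr_decidable _ _ _

lemma Pr_nonneg (hv : ValidP p1 p2 p12) (A : Config n → Prop) : 0 ≤ Pr n p1 p2 p12 A :=
  sum_nonneg fun f _ => configProb_nonneg hv f

lemma Pr_mono (hv : ValidP p1 p2 p12) {A B : Config n → Prop} (hAB : ∀ f, A f → B f) :
    Pr n p1 p2 p12 A ≤ Pr n p1 p2 p12 B := by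
  classical
  rw [Pr_eq_sum, Pr_eq_sum]
  exact sum_le_sum_of_subset_of_nonneg (monotone_filter_right _ fun f _ => hAB f)
    fun f _ _ => configProb_nonneg hv f

lemma Pr_pos_le_expect (hv : ValidP p1 p2 p12) (N : Config n → ℕ) :
    Pr n p1 p2 p12 (fun f => 0 < N f) ≤ expect n p1 p2 p12 (fun f => N f) := by
  classical
  rw [Pr_eq_sum, sum_filter, expect]
  refine sum_le_sum fun f _ => ?_
  split_ifs with hpos
  · exact le_mul_of_one_le_right (configProb_nonneg hv f) (by exact_mod_cast hpos)
  · exact mul_nonneg (configProb_nonneg hv f) (Nat.cast_nonneg _)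

lemma Pr_forall_mem (S : PairIdx n → Finset (Bool × Bool)) :
    Pr n p1 p2 p12 (fun f => ∀ p, f p ∈ S p) = ∏ p, ∑ v ∈ S p, edgeW p1 p2 p12 v := by
  classical
  rw [Pr_eq_sum, prod_univ_sum]
  congr 1
  ext f
  simp only [mem_filter, mem_univ, true_and]
  exact Fintype.mem_piFinset.symm

lemma sum_edgeW_filter (a b : Prop) [Decidable a] [Decidable b] :
    ∑ v ∈ univ.filter (fun v : Bool × Bool => (a → v.1 = true) ∧ (b → v.2 = true)),
        edgeW p1 p2 p12 v
      = (if a ∧ ¬b then p1 else 1) * (if b ∧ ¬a then p2 else 1) * (if a ∧ b then p12 else 1) := by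
  rw [sum_filter]
  by_cases ha : a <;> by_cases hb : b <;> simp [Fintype.sum_prod_type, ha, hb, edgeW]

lemma Pr_cylinder (A B : Finset (PairIdx n)) :
    Pr n p1 p2 p12 (fun f => (∀ p ∈ A, (f p).1 = true) ∧ ∀ p ∈ B, (f p).2 = true)
      = p1 ^ #(A \ B) * p2 ^ #(B \ A) * p12 ^ #(A ∩ B) := by
  classical
  have hevent : (fun f : Config n => (∀ p ∈ A, (f p).1 = true) ∧ ∀ p ∈ B, (f p).2 = true)
      = fun f => ∀ p, f p ∈ univ.filter
          (fun v : Bool × Bool => (p ∈ A → v.1 = true) ∧ (p ∈ B → v.2 = true)) := by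
    ext f
    simp only [mem_filter, mem_univ, true_and]
    exact ⟨fun ⟨h1, h2⟩ p => ⟨h1 p, h2 p⟩, fun h => ⟨fun p => (h p).1, fun p => (h p).2⟩⟩
  simp_rw [hevent, Pr_forall_mem, sum_edgeW_filter, prod_mul_distrib, ← mem_sdiff, ← mem_inter,
    prod_ite_mem, univ_inter, prod_const]

end Probability

section Homomorphisms

variable {V : Type} [DecidableEq V] {n : ℕ}

open Classical in
def pairsOf {S : Finset V} (φ : {x // x ∈ S} → Fin n) (E : Finset (Sym2 V)) :
    Finset (PairIdx n) :=
  univ.filter fun p => ∃ a b, s(a.val, b.val) ∈ E ∧ p.val = (φ a, φ b)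

variable {S : Finset V} {φ : {x // x ∈ S} → Fin n}

lemma mem_pairsOf {E : Finset (Sym2 V)} {p : PairIdx n} :
    p ∈ pairsOf φ E ↔ ∃ a b, s(a.val, b.val) ∈ E ∧ p.val = (φ a, φ b) := by
  simp [pairsOf]

lemma mem_pairsOf_iff (hφ : Function.Injective φ) {E : Finset (Sym2 V)} {p : PairIdx n}
    {a b : {x // x ∈ S}} (hp : p.val = (φ a, φ b)) :
    p ∈ pairsOf φ E ↔ s(a.val, b.val) ∈ E := by
  refine ⟨fun h => ?_, fun h => mem_pairsOf.2 ⟨a, b, h, hp⟩⟩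
  obtain ⟨a', b', hE, hp'⟩ := mem_pairsOf.1 h
  obtain ⟨ha, hb⟩ := Prod.mk.inj (hp.symm.trans hp')
  rwa [hφ ha, hφ hb]

lemma pairsOf_sdiff (hφ : Function.Injective φ) (E E' : Finset (Sym2 V)) :
    pairsOf φ (E \ E') = pairsOf φ E \ pairsOf φ E' := by
  ext p
  rw [mem_sdiff]
  constructor
  · intro h
    obtain ⟨a, b, hE, hp⟩ := mem_pairsOf.1 h
    rw [mem_pairsOf_iff hφ hp, mem_pairsOf_iff hφ hp]
    exact mem_sdiff.1 hE
  · rintro ⟨h, h'⟩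
    obtain ⟨a, b, -, hp⟩ := mem_pairsOf.1 h
    rw [mem_pairsOf_iff hφ hp] at h h' ⊢
    exact mem_sdiff.2 ⟨h, h'⟩

lemma pairsOf_inter (hφ : Function.Injective φ) (E E' : Finset (Sym2 V)) :
    pairsOf φ (E ∩ E') = pairsOf φ E ∩ pairsOf φ E' := by
  ext p
  rw [mem_inter]
  constructor
  · intro h
    obtain ⟨a, b, hE, hp⟩ := mem_pairsOf.1 h
    rw [mem_pairsOf_iff hφ hp, mem_pairsOf_iff hφ hp]
    exact mem_inter.1 hE
  · rintro ⟨h, h'⟩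
    obtain ⟨a, b, -, hp⟩ := mem_pairsOf.1 h
    rw [mem_pairsOf_iff hφ hp] at h h' ⊢
    exact mem_inter.2 ⟨h, h'⟩

lemma card_le_card_pairsOf (hφ : Function.Injective φ) {E : Finset (Sym2 V)}
    (hS : ∀ e ∈ E, ∀ x ∈ e, x ∈ S) (hloop : ∀ e ∈ E, ¬ e.IsDiag) :
    #E ≤ #(pairsOf φ E) := by
  refine card_le_card_of_forall_subsingleton
    (fun e p => ∃ a b, e = s(a.val, b.val) ∧ p.val = (φ a, φ b)) (fun e he => ?_) ?_
  · induction e using Sym2.ind with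
    | _ x y =>
      have hx : x ∈ S := hS _ he x (Sym2.mem_mk_left x y)
      have hy : y ∈ S := hS _ he y (Sym2.mem_mk_right x y)
      have hxy : φ ⟨x, hx⟩ ≠ φ ⟨y, hy⟩ := fun h =>
        hloop _ he (Sym2.mk_isDiag_iff.2 (congrArg Subtype.val (hφ h)))
      rcases hxy.lt_or_gt with hlt | hgt
      · exact ⟨⟨_, hlt⟩, mem_pairsOf.2 ⟨_, _, he, rfl⟩, _, _, rfl, rfl⟩
      · exact ⟨⟨_, hgt⟩, mem_pairsOf.2 ⟨_, _, Sym2.eq_swap ▸ he, rfl⟩, _, _,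
          Sym2.eq_swap, rfl⟩
  · rintro p - e ⟨-, a, b, rfl, hp⟩ e' ⟨-, a', b', rfl, hp'⟩
    obtain ⟨ha, hb⟩ := Prod.mk.inj (hp.symm.trans hp')
    rw [hφ ha, hφ hb]

lemma IsHom.cylinder {F : Multiplex V} {φ : {x // x ∈ F.verts} → Fin n} {f : Config n}
    (h : IsHom F φ f) :
    (∀ p ∈ pairsOf φ F.E1, (f p).1 = true) ∧ ∀ p ∈ pairsOf φ F.E2, (f p).2 = true := by
  constructor
  · intro p hp
    obtain ⟨a, b, he, hab⟩ := mem_pairsOf.1 hp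
    exact PairIdx.apply_of_adj (fun v => v.1 = true) (h.1 a b he) hab
  · intro p hp
    obtain ⟨a, b, he, hab⟩ := mem_pairsOf.1 hp
    exact PairIdx.apply_of_adj (fun v => v.2 = true) (h.2 a b he) hab

variable {p1 p2 p12 : ℝ}

lemma Pr_isHom_le (hv : ValidP p1 p2 p12) (F : Multiplex V)
    {φ : {x // x ∈ F.verts} → Fin n} (hφ : Function.Injective φ) :
    Pr n p1 p2 p12 (IsHom F φ)
      ≤ p1 ^ #(F.E1 \ F.E2) * p2 ^ #(F.E2 \ F.E1) * p12 ^ #(F.E1 ∩ F.E2) := by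
  have ⟨h1, h1', h2, h2', h12, _, h12'⟩ := hv
  have h12'' : p12 ≤ 1 := (h12'.trans (min_le_left _ _)).trans h1'.le
  have hcard : ∀ E ⊆ F.E1 ∪ F.E2, #E ≤ #(pairsOf φ E) := fun E hE =>
    card_le_card_pairsOf hφ (fun e he => F.support e (hE he)) (fun e he => F.loopless e (hE he))
  calc Pr n p1 p2 p12 (IsHom F φ)
      ≤ Pr n p1 p2 p12 (fun f => (∀ p ∈ pairsOf φ F.E1, (f p).1 = true) ∧
          ∀ p ∈ pairsOf φ F.E2, (f p).2 = true) :=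
        Pr_mono hv fun f h => h.cylinder
    _ = p1 ^ #(pairsOf φ (F.E1 \ F.E2)) * p2 ^ #(pairsOf φ (F.E2 \ F.E1))
          * p12 ^ #(pairsOf φ (F.E1 ∩ F.E2)) := by
        rw [Pr_cylinder, pairsOf_sdiff hφ, pairsOf_sdiff hφ, pairsOf_inter hφ]
    _ ≤ p1 ^ #(F.E1 \ F.E2) * p2 ^ #(F.E2 \ F.E1) * p12 ^ #(F.E1 ∩ F.E2) := by
        gcongr ?_ * ?_ * ?_
        · exact pow_le_pow_of_le_one h1.le h1'.le
            (hcard _ (sdiff_subset.trans subset_union_left))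
        · exact pow_le_pow_of_le_one h2.le h2'.le
            (hcard _ (sdiff_subset.trans subset_union_right))
        · exact pow_le_pow_of_le_one h12.le h12''
            (hcard _ (inter_subset_left.trans subset_union_left))

lemma expect_homCount (F : Multiplex V) :
    expect n p1 p2 p12 (fun f => homCount n F f)
      = ∑ φ : {x // x ∈ F.verts} ↪ Fin n, Pr n p1 p2 p12 (IsHom F φ) := by
  classical
  simp only [expect, homCount, card_filter]
  push_cast
  simp_rw [mul_sum]
  rw [sum_comm]
  refine sum_congr rfl fun φ _ => ?_
  rw [Pr_eq_sum, sum_filter]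
  simp

lemma expect_homCount_le_phiVal (hv : ValidP p1 p2 p12) (F : Multiplex V) :
    expect n p1 p2 p12 (fun f => homCount n F f) ≤ phiVal F n p1 p2 p12 := by
  have hembed : (Fintype.card ({x // x ∈ F.verts} ↪ Fin n) : ℝ) ≤ (n : ℝ) ^ #F.verts := by
    rw [Fintype.card_embedding_eq, Fintype.card_coe, Fintype.card_fin]
    exact_mod_cast Nat.descFactorial_le_pow n _
  calc expect n p1 p2 p12 (fun f => homCount n F f)
      ≤ ∑ _φ : {x // x ∈ F.verts} ↪ Fin n,
          p1 ^ #(F.E1 \ F.E2) * p2 ^ #(F.E2 \ F.E1) * p12 ^ #(F.E1 ∩ F.E2) := by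
        rw [expect_homCount]
        exact sum_le_sum fun φ _ => Pr_isHom_le hv F φ.injective
    _ = Fintype.card ({x // x ∈ F.verts} ↪ Fin n)
          * (p1 ^ #(F.E1 \ F.E2) * p2 ^ #(F.E2 \ F.E1) * p12 ^ #(F.E1 ∩ F.E2)) := by
        rw [sum_const, card_univ, nsmul_eq_mul]
    _ ≤ (n : ℝ) ^ #F.verts
          * (p1 ^ #(F.E1 \ F.E2) * p2 ^ #(F.E2 \ F.E1) * p12 ^ #(F.E1 ∩ F.E2)) := by
        obtain ⟨h1, -, h2, -, h12, -⟩ := hv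
        gcongr
    _ = phiVal F n p1 p2 p12 := by
        rw [phiVal]
        ring

lemma homCount_pos_of_sub {F H : Multiplex V} (hsub : F.Sub H) {f : Config n}
    (h : 0 < homCount n H f) : 0 < homCount n F f := by
  classical
  obtain ⟨hverts, hE1, hE2⟩ := hsub
  rw [homCount, card_pos] at h ⊢
  obtain ⟨φ, hφ⟩ := h
  rw [mem_filter] at hφ
  let ι : {x // x ∈ F.verts} ↪ {x // x ∈ H.verts} :=
    Function.Embedding.subtypeMap (.refl V) hverts
  refine ⟨ι.trans φ, mem_filter.2 ⟨mem_univ _, ?_, ?_⟩⟩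
  · exact fun a b hab => hφ.2.1 (ι a) (ι b) (hE1 hab)
  · exact fun a b hab => hφ.2.2 (ι a) (ι b) (hE2 hab)

end Homomorphisms

theorem stmt10_general {V : Type} [DecidableEq V] (H : Multiplex V)
    (p1 p2 p12 : ℕ → ℝ) (hvalid : ∀ n, ValidP (p1 n) (p2 n) (p12 n))
    (Fstar : Multiplex V) (hsub : Fstar.Sub H)
    (hPhi : Filter.Tendsto (fun n => phiVal Fstar n (p1 n) (p2 n) (p12 n))
      Filter.atTop (nhds 0)) :
    Filter.Tendsto (fun n => Pr n (p1 n) (p2 n) (p12 n) (fun f => 0 < homCount n H f))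
      Filter.atTop (nhds 0) := by
  refine squeeze_zero (fun n => Pr_nonneg (hvalid n) _) (fun n => ?_) hPhi
  calc Pr n (p1 n) (p2 n) (p12 n) (fun f => 0 < homCount n H f)
      ≤ Pr n (p1 n) (p2 n) (p12 n) (fun f => 0 < homCount n Fstar f) :=
        Pr_mono (hvalid n) fun f => homCount_pos_of_sub hsub
    _ ≤ expect n (p1 n) (p2 n) (p12 n) (fun f => homCount n Fstar f) :=
        Pr_pos_le_expect (hvalid n) _
    _ ≤ phiVal Fstar n (p1 n) (p2 n) (p12 n) := expect_homCount_le_phiVal (hvalid n) Fstar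

theorem stmt10 {V : Type} [DecidableEq V] (H : Multiplex V)
    (hedge : (H.E1 ∪ H.E2).Nonempty)
    (p1 p2 p12 : ℕ → ℝ) (hvalid : ∀ n, ValidP (p1 n) (p2 n) (p12 n))
    (Fstar : Multiplex V) (hsub : Fstar.Sub H)
    (hFedge : (Fstar.E1 ∪ Fstar.E2).Nonempty)
    (hmin : ∀ (n : ℕ) (F : Multiplex V), F.Sub H → (F.E1 ∪ F.E2).Nonempty →
      phiVal Fstar n (p1 n) (p2 n) (p12 n) ≤ phiVal F n (p1 n) (p2 n) (p12 n))
    (hPhi : Filter.Tendsto (fun n => phiVal Fstar n (p1 n) (p2 n) (p12 n))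
      Filter.atTop (nhds 0)) :
    Filter.Tendsto (fun n => Pr n (p1 n) (p2 n) (p12 n) (fun f => 0 < homCount n H f))
      Filter.atTop (nhds 0) :=
  stmt10_general H p1 p2 p12 hvalid Fstar hsub hPhi
end

section
/- For the edge-triangle multiplex R on vertices {1,2,3} with layer-1 edges {(1,2),(2,3),(1,3)} and layer-2 edge {(2,3)}, and with θ₁ = θ₂ = θ, the two-dimensional satisfiability region {(θ, θ₁₂) : θ > 0, θ₁₂ > 0, θ ≤ θ₁₂, ℓ_F(θ, θ, θ₁₂) > 0 for all F ⊆ R with an edge} equals {(θ, θ₁₂) : 0 < θ ≤ θ₁₂, 2θ + θ₁₂ < 3, θ₁₂ < 2}. -/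
def Rtri : Multiplex (Fin 3) where
  verts := Finset.univ
  E1 := {s(0, 1), s(1, 2), s(0, 2)}
  E2 := {s(1, 2)}
  support := fun _ _ x _ => Finset.mem_univ x
  loopless := by decide

theorem stmt15 :
    {q : ℝ × ℝ | 0 < q.1 ∧ 0 < q.2 ∧ q.1 ≤ q.2 ∧
        ∀ F : Multiplex (Fin 3), F.Sub Rtri → (F.E1 ∪ F.E2).Nonempty →
          0 < ell F (q.1, q.1, q.2)} =
      {q : ℝ × ℝ | 0 < q.1 ∧ q.1 ≤ q.2 ∧ 2 * q.1 + q.2 < 3 ∧ q.2 < 2} := by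
  ext ⟨θ, t⟩
  simp only [Set.mem_setOf_eq]
  constructor
  · rintro ⟨h1, h2, h3, h4⟩
    refine ⟨h1, h3, ?_, ?_⟩
    · have hR := h4 Rtri ⟨subset_rfl, subset_rfl, subset_rfl⟩ ⟨s(1,2), by decide⟩
      have c1 : (Rtri.E1 \ Rtri.E2).card = 2 := by decide
      have c2 : (Rtri.E2 \ Rtri.E1).card = 0 := by decide
      have c3 : (Rtri.E1 ∩ Rtri.E2).card = 1 := by decide
      have cv : (Rtri.verts).card = 3 := by decide
      rw [ell, c1, c2, c3, cv] at hR
      push_cast at hR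
      linarith
    · have hP := h4 ⟨{1,2}, {s(1,2)}, {s(1,2)}, by decide, by decide⟩
        ⟨by decide, by decide, by decide⟩ ⟨s(1,2), by decide⟩
      have c1 : (({s(1,2)} : Finset (Sym2 (Fin 3))) \ {s(1,2)}).card = 0 := by decide
      have c3 : (({s(1,2)} : Finset (Sym2 (Fin 3))) ∩ {s(1,2)}).card = 1 := by decide
      have cv : ({1,2} : Finset (Fin 3)).card = 2 := by decide
      rw [ell] at hP
      simp only at hP
      rw [c1, c3, cv] at hP
      push_cast at hP
      linarith
  · rintro ⟨h1, h3, hsum, ht2⟩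
    have hθ1 : θ < 1 := by linarith
    refine ⟨h1, by linarith, h3, ?_⟩
    rintro F ⟨hV, hs1, hs2⟩ hne
    set a := (F.E1 \ F.E2).card with ha
    set b := (F.E2 \ F.E1).card with hb
    set c := (F.E1 ∩ F.E2).card with hc
    set n := F.verts.card with hn
    have h1' : (F.E1 \ F.E2).card + (F.E1 ∩ F.E2).card = F.E1.card :=
      Finset.card_sdiff_add_card_inter _ _
    have h2' : (F.E2 \ F.E1).card + (F.E2 ∩ F.E1).card = F.E2.card :=
      Finset.card_sdiff_add_card_inter _ _
    rw [Finset.inter_comm] at h2'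
    have hu := Finset.card_union_add_card_inter F.E1 F.E2
    have habc : a + b + c = (F.E1 ∪ F.E2).card := by omega
    have hE2card : F.E2.card ≤ 1 := by
      calc F.E2.card ≤ (Rtri.E2).card := Finset.card_le_card hs2
        _ = 1 := by decide
    have hbc : b + c ≤ 1 := by omega
    have hE1card : F.E1.card ≤ 3 := by
      calc F.E1.card ≤ (Rtri.E1).card := Finset.card_le_card hs1
        _ = 3 := by decide
    have hac : a + c ≤ 3 := by omega
    have hmemR : ∀ f ∈ Rtri.E1 ∪ Rtri.E2,
        f = s((0:Fin 3),1) ∨ f = s((1:Fin 3),2) ∨ f = s((0:Fin 3),2) := by decide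
    have hmem : ∀ f ∈ F.E1 ∪ F.E2,
        f = s((0:Fin 3),1) ∨ f = s((1:Fin 3),2) ∨ f = s((0:Fin 3),2) := by
      intro f hf
      apply hmemR
      rcases Finset.mem_union.1 hf with h | h
      · exact Finset.mem_union_left _ (hs1 h)
      · exact Finset.mem_union_right _ (hs2 h)
    -- n ≥ 2
    obtain ⟨e, he⟩ := hne
    obtain ⟨x, y⟩ := e
    have hxy : x ≠ y := fun h => F.loopless _ he (by simp [h])
    have hx : x ∈ F.verts := F.support _ he x (by simp)
    have hy : y ∈ F.verts := F.support _ he y (by simp)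
    have hn2 : 2 ≤ n := by
      rw [hn]
      exact Finset.one_lt_card.2 ⟨x, hx, y, hy, hxy⟩
    rw [ell]
    simp only
    rw [← ha, ← hb, ← hc, ← hn]
    by_cases hU : (F.E1 ∪ F.E2).card ≤ 1
    -- single edge case
    · have h1le : a + b + c ≤ 1 := by omega
      have hca : (a : ℝ) + b + c ≤ 1 := by exact_mod_cast h1le
      have hcn : (2 : ℝ) ≤ n := by exact_mod_cast hn2
      have ha0 : (0:ℝ) ≤ (a:ℝ) := by positivity
      have hb0 : (0:ℝ) ≤ (b:ℝ) := by positivity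
      have hc0 : (0:ℝ) ≤ (c:ℝ) := by positivity
      nlinarith [mul_nonneg (le_of_lt h1) ha0, mul_nonneg (le_of_lt h1) hb0]
    -- at least two edges: show n = 3
    · push_neg at hU
      have hn3 : 3 ≤ n := by
        obtain ⟨e₁, he₁, e₂, he₂, hne12⟩ := Finset.one_lt_card.1 hU
        have hall : ∀ v : Fin 3, v ∈ F.verts := by
          have h01 : ∀ f ∈ F.E1 ∪ F.E2, ∀ v : Fin 3, v ∈ f → v ∈ F.verts := F.support
          intro v
          rcases hmem e₁ he₁ with rfl | rfl | rfl <;>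
            rcases hmem e₂ he₂ with h2 | h2 | h2 <;>
            first
              | exact absurd h2.symm hne12
              | (subst h2; fin_cases v <;>
                  first
                    | (refine h01 _ he₁ _ ?_; decide)
                    | (refine h01 _ he₂ _ ?_; decide))
        rw [hn]
        have hsub : (Finset.univ : Finset (Fin 3)) ⊆ F.verts := fun v _ => hall v
        calc 3 = (Finset.univ : Finset (Fin 3)).card := by decide
          _ ≤ F.verts.card := Finset.card_le_card hsub
      have hcn : (3 : ℝ) ≤ n := by exact_mod_cast hn3
      have hc1 : c ≤ 1 := by omega
      interval_cases c
      · -- c = 0 : a + b ≤ 3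
        have hab3 : a + b ≤ 3 := by
          rcases Nat.le_one_iff_eq_zero_or_eq_one.1 (by omega : b ≤ 1) with hb0 | hb1
          · omega
          · -- b = 1 : s(1,2) ∈ E2 \ E1, so E1 ⊆ {s(0,1), s(0,2)}
            have hE1sub : F.E1 ⊆ {s((0:Fin 3),1), s(0,2)} := by
              intro f hf
              have hfm := hmem f (Finset.mem_union_left _ hf)
              have hs12 : s((1:Fin 3),2) ∉ F.E1 := by
                intro hcon
                have hempty : (F.E2 \ F.E1) = ∅ := by
                  apply Finset.eq_empty_of_forall_notMem
                  intro g hg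
                  have hg2 : g ∈ F.E2 := (Finset.mem_sdiff.1 hg).1
                  have hg1 : g ∉ F.E1 := (Finset.mem_sdiff.1 hg).2
                  have hgR : g ∈ Rtri.E2 := hs2 hg2
                  have hgeq : g = s((1:Fin 3),2) := by
                    have : ∀ g ∈ Rtri.E2, g = s((1:Fin 3),2) := by decide
                    exact this g hgR
                  exact hg1 (hgeq ▸ hcon)
                rw [hb, hempty] at hb1
                simp at hb1
              rcases hfm with rfl | rfl | rfl
              · exact Finset.mem_insert_self _ _
              · exact absurd hf hs12
              · exact Finset.mem_insert_of_mem (Finset.mem_singleton_self _)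
            have hle2 : F.E1.card ≤ 2 := by
              calc F.E1.card ≤ ({s((0:Fin 3),1), s(0,2)} : Finset _).card :=
                  Finset.card_le_card hE1sub
                _ = 2 := by decide
            omega
        have hcab : (a : ℝ) + b ≤ 3 := by exact_mod_cast hab3
        have ha0 : (0:ℝ) ≤ (a:ℝ) := by positivity
        have hb0 : (0:ℝ) ≤ (b:ℝ) := by positivity
        push_cast
        nlinarith
      · -- c = 1 : b = 0, a ≤ 2
        have hb0 : b = 0 := by omega
        have ha2 : a ≤ 2 := by omega
        have hca : (a : ℝ) ≤ 2 := by exact_mod_cast ha2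
        have ha0 : (0:ℝ) ≤ (a:ℝ) := by positivity
        rw [hb0]
        push_cast
        nlinarith
end
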